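/- arXiv:0808.1493 — 12 statements merged into one kernel-verified Lean document; each statement's English description precedes it below -/
import Mathlib

section
/- For all x in (0, π/2), sin(x) · cosh(x) > x. -/
/-!
Let `f x = sin x * cosh x - x`. Then `f 0 = 0`, `f' x = cos x * cosh x + sin x * sinh x - 1`
also vanishes at `0`, and `f'' x = 2 * cos x * sinh x > 0` on `(0, π/2)`. Two applications of
"a function vanishing at the left endpoint with positive derivative is positive" give `f > 0`.
-/

open Real Set

theorem pos_of_hasDerivAt_pos {f f' : ℝ → ℝ} {a b x : ℝ} (hcont : ContinuousOn f (Icc a b))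
    (hderiv : ∀ y ∈ Ioo a b, HasDerivAt f (f' y) y) (hpos : ∀ y ∈ Ioo a b, 0 < f' y)
    (ha : f a = 0) (hx : x ∈ Ioc a b) : 0 < f x := by
  have hmono : StrictMonoOn f (Icc a b) :=
    strictMonoOn_of_deriv_pos (convex_Icc a b) hcont fun y hy => by
      rw [interior_Icc] at hy
      exact (hderiv y hy).deriv ▸ hpos y hy
  exact ha ▸ hmono (left_mem_Icc.2 (hx.1.le.trans hx.2)) (Ioc_subset_Icc_self hx) hx.1

theorem Real.hasDerivAt_cos_mul_cosh_add_sin_mul_sinh (y : ℝ) :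
    HasDerivAt (fun y => cos y * cosh y + sin y * sinh y) (2 * cos y * sinh y) y := by
  have h : HasDerivAt (fun y => cos y * cosh y + sin y * sinh y) _ y :=
    ((hasDerivAt_cos y).mul (hasDerivAt_cosh y)).add ((hasDerivAt_sin y).mul (hasDerivAt_sinh y))
  convert h using 1
  ring

theorem Real.hasDerivAt_sin_mul_cosh_sub_id (y : ℝ) :
    HasDerivAt (fun y => sin y * cosh y - y) (cos y * cosh y + sin y * sinh y - 1) y :=
  ((hasDerivAt_sin y).mul (hasDerivAt_cosh y)).sub (hasDerivAt_id y)

theorem Real.one_lt_cos_mul_cosh_add_sin_mul_sinh {x : ℝ} (hx : x ∈ Ioc 0 (π / 2)) :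
    1 < cos x * cosh x + sin x * sinh x := by
  have hpos : ∀ y ∈ Ioo 0 (π / 2), 0 < 2 * cos y * sinh y := fun y hy => by
    have hcos : 0 < cos y := cos_pos_of_mem_Ioo ⟨by linarith [pi_pos, hy.1], hy.2⟩
    have hsinh : 0 < sinh y := sinh_pos_iff.2 hy.1
    positivity
  have := pos_of_hasDerivAt_pos (f := fun y => cos y * cosh y + sin y * sinh y - 1)
    (by fun_prop) (fun y _ => (hasDerivAt_cos_mul_cosh_add_sin_mul_sinh y).sub_const 1)
    hpos (by simp) hx
  linarith

theorem Real.lt_sin_mul_cosh {x : ℝ} (hx : x ∈ Ioc 0 (π / 2)) : x < sin x * cosh x := by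
  have := pos_of_hasDerivAt_pos (f := fun y => sin y * cosh y - y) (by fun_prop)
    (fun y _ => hasDerivAt_sin_mul_cosh_sub_id y)
    (fun y hy => sub_pos.2 (one_lt_cos_mul_cosh_add_sin_mul_sinh (Ioo_subset_Ioc_self hy)))
    (by simp) hx
  linarith

theorem stmt_0 (x : ℝ) (hx : x ∈ Set.Ioo 0 (Real.pi / 2)) :
    Real.sin x * Real.cosh x > x :=
  Real.lt_sin_mul_cosh (Set.Ioo_subset_Ioc_self hx)
end

section
/- For all x in (0, π/2), x² > sin(x) · sinh(x). -/
/-!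
Put `f(x) = x² - sin x sinh x`. Then `f(0) = f'(0) = f''(0) = f'''(0) = 0` and
`f'''' = 4 sin sinh`, which is positive on `(0, π)`. Integrating four times from `0`,
each of `f''', f'', f', f` is positive on `(0, π)`.
-/

open Real Set

lemma pos_of_hasDerivAt_pos_of_eq_zero {f f' : ℝ → ℝ} {a : ℝ}
    (hf : ∀ y, HasDerivAt f (f' y) y) (h₀ : f 0 = 0) (hf' : ∀ y ∈ Ioo 0 a, 0 < f' y)
    {y : ℝ} (hy : y ∈ Ioo 0 a) : 0 < f y := by
  have hmono : StrictMonoOn f (Icc 0 a) :=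
    strictMonoOn_of_hasDerivWithinAt_pos (convex_Icc 0 a)
      (HasDerivAt.continuousOn fun y _ ↦ hf y)
      (fun y _ ↦ (hf y).hasDerivWithinAt) (by simpa only [interior_Icc] using hf')
  simpa only [h₀] using
    hmono (left_mem_Icc.2 (hy.1.trans hy.2).le) (Ioo_subset_Icc_self hy) hy.1

lemma sin_mul_sinh_pos {y : ℝ} (hy : y ∈ Ioo 0 π) : 0 < sin y * sinh y :=
  mul_pos (sin_pos_of_pos_of_lt_pi hy.1 hy.2) (sinh_pos_iff.2 hy.1)

lemma cos_mul_sinh_lt_sin_mul_cosh {y : ℝ} (hy : y ∈ Ioo 0 π) :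
    cos y * sinh y < sin y * cosh y := by
  refine sub_pos.1 <| pos_of_hasDerivAt_pos_of_eq_zero
    (f := fun y ↦ sin y * cosh y - cos y * sinh y) (fun y ↦ ?_) (by simp)
    (fun y hy ↦ mul_pos two_pos (sin_mul_sinh_pos hy)) hy
  exact (((hasDerivAt_sin y).mul (hasDerivAt_cosh y)).sub
    ((hasDerivAt_cos y).mul (hasDerivAt_sinh y))).congr_deriv (by ring)

lemma cos_mul_cosh_lt_one {y : ℝ} (hy : y ∈ Ioo 0 π) : cos y * cosh y < 1 := by
  refine sub_pos.1 <| pos_of_hasDerivAt_pos_of_eq_zero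
    (f := fun y ↦ 1 - cos y * cosh y) (fun y ↦ ?_) (by simp)
    (fun y hy ↦ sub_pos.2 (cos_mul_sinh_lt_sin_mul_cosh hy)) hy
  exact ((hasDerivAt_const y 1).sub
    ((hasDerivAt_cos y).mul (hasDerivAt_cosh y))).congr_deriv (by ring)

lemma cos_mul_sinh_add_sin_mul_cosh_lt {y : ℝ} (hy : y ∈ Ioo 0 π) :
    cos y * sinh y + sin y * cosh y < 2 * y := by
  refine sub_pos.1 <| pos_of_hasDerivAt_pos_of_eq_zero
    (f := fun y ↦ 2 * y - (cos y * sinh y + sin y * cosh y))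
    (f' := fun y ↦ 2 * (1 - cos y * cosh y)) (fun y ↦ ?_) (by simp)
    (fun y hy ↦ mul_pos two_pos (sub_pos.2 (cos_mul_cosh_lt_one hy))) hy
  exact (((hasDerivAt_id y).const_mul 2).sub
    (((hasDerivAt_cos y).mul (hasDerivAt_sinh y)).add
      ((hasDerivAt_sin y).mul (hasDerivAt_cosh y)))).congr_deriv (by ring)

lemma sin_mul_sinh_lt_sq {y : ℝ} (hy : y ∈ Ioo 0 π) : sin y * sinh y < y ^ 2 := by
  refine sub_pos.1 <| pos_of_hasDerivAt_pos_of_eq_zero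
    (f := fun y ↦ y ^ 2 - sin y * sinh y) (fun y ↦ ?_) (by simp)
    (fun y hy ↦ sub_pos.2 (cos_mul_sinh_add_sin_mul_cosh_lt hy)) hy
  exact ((hasDerivAt_pow 2 y).sub
    ((hasDerivAt_sin y).mul (hasDerivAt_sinh y))).congr_deriv (by ring)

theorem stmt_1 (x : ℝ) (hx : x ∈ Set.Ioo 0 (Real.pi / 2)) :
    x ^ 2 > Real.sin x * Real.sinh x :=
  sin_mul_sinh_lt_sq (Ioo_subset_Ioo_right (half_le_self pi_pos.le) hx)
end

section
/- For all x in (0, π/2), sin(x) · sinh(x)² > x³. -/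
/-!
Both factors are bounded below by their cubic Taylor polynomials, `sin x ≥ x - x³/6` and
`sinh x ≥ x + x³/6`, and for `t = x²/6` the product of these polynomials is
`x³ (1 + t (1 - t - t²))`, which exceeds `x³` as long as `t + t² < 1`; `x < π/2` gives `t < 1/2`.
-/

open Real

theorem Real.add_cube_div_six_le_sinh {x : ℝ} (hx : 0 ≤ x) : x + x ^ 3 / 6 ≤ sinh x := by
  have hsum := sum_le_hasSum (Finset.range 2) (fun n _ => by positivity) (hasSum_sinh x)
  norm_num [Finset.sum_range_succ, Nat.factorial] at hsum
  linarith

theorem cube_lt_sub_cube_div_six_mul_add_cube_div_six_sq {x : ℝ} (hx : 0 < x) (hx3 : x ^ 2 ≤ 3) :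
    x ^ 3 < (x - x ^ 3 / 6) * (x + x ^ 3 / 6) ^ 2 := by
  have hexpand : (x - x ^ 3 / 6) * (x + x ^ 3 / 6) ^ 2
      = x ^ 3 + x ^ 5 / 6 * (1 - x ^ 2 / 6 - (x ^ 2 / 6) ^ 2) := by ring
  have hfactor : 0 < 1 - x ^ 2 / 6 - (x ^ 2 / 6) ^ 2 := by nlinarith [sq_nonneg x]
  have hx5 : 0 < x ^ 5 / 6 := by positivity
  linarith [mul_pos hx5 hfactor]

theorem stmt_2 (x : ℝ) (hx : x ∈ Set.Ioo 0 (Real.pi / 2)) :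
    Real.sin x * Real.sinh x ^ 2 > x ^ 3 := by
  obtain ⟨hx0, hxpi⟩ := hx
  have hx3 : x ^ 2 ≤ 3 := by nlinarith [pi_lt_d2]
  have hsin : 0 ≤ x - x ^ 3 / 6 := by nlinarith
  calc x ^ 3 < (x - x ^ 3 / 6) * (x + x ^ 3 / 6) ^ 2 :=
        cube_lt_sub_cube_div_six_mul_add_cube_div_six_sq hx0 hx3
    _ ≤ sin x * sinh x ^ 2 := by
        have hsinx := sin_ge_sub_cube hx0.le
        have hsinhx := add_cube_div_six_le_sinh hx0.le
        exact mul_le_mul hsinx (by gcongr) (by positivity) (hsin.trans hsinx)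
end

section
/- For all x in (0, π/2), cosh(x) · (1 + cos(x)) ≥ 2. -/
/-!
Put `t = x / 2`, so that `1 + cos x = 2 cos² t`. The truncated series `1 + 2t² ≤ cosh (2t)` and
`1 - t²/2 ≤ cos t` reduce the claim to the polynomial inequality `(1 + 2u)(1 - u/2)² ≥ 1` for
`u = t²`, i.e. `u (2u² - 7u + 4) ≥ 0`, which holds for `0 ≤ u ≤ 2/3`; and `t² < (π/4)² < 2/3`.
-/

open Real

lemma Real.one_add_sq_div_two_le_cosh (x : ℝ) : 1 + x ^ 2 / 2 ≤ cosh x := by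
  have h := sum_le_hasSum (Finset.range 2) (fun n _ ↦ by rw [pow_mul]; positivity) (hasSum_cosh x)
  simpa [Finset.sum_range_succ] using h

lemma Real.one_le_cosh_two_mul_mul_cos_sq {t : ℝ} (ht : t ^ 2 ≤ 2 / 3) :
    1 ≤ cosh (2 * t) * cos t ^ 2 := by
  have hcosh : 1 + 2 * t ^ 2 ≤ cosh (2 * t) := by
    linarith [one_add_sq_div_two_le_cosh (2 * t)]
  have hcos : 1 - t ^ 2 / 2 ≤ cos t := one_sub_sq_div_two_le_cos
  have hcos_nonneg : 0 ≤ 1 - t ^ 2 / 2 := by linarith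
  calc 1 ≤ (1 + 2 * t ^ 2) * (1 - t ^ 2 / 2) ^ 2 := by
          nlinarith [sq_nonneg t, mul_nonneg (sq_nonneg t) (sub_nonneg.2 ht)]
    _ ≤ cosh (2 * t) * cos t ^ 2 := by gcongr

theorem stmt_6 (x : ℝ) (hx : x ∈ Set.Ioo 0 (Real.pi / 2)) :
    Real.cosh x * (1 + Real.cos x) ≥ 2 := by
  obtain ⟨t, rfl⟩ : ∃ t, x = 2 * t := ⟨x / 2, by ring⟩
  obtain ⟨ht0, htpi⟩ := hx
  have hsq : t ^ 2 ≤ 2 / 3 := by nlinarith [pi_lt_d2]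
  have hcos : 1 + cos (2 * t) = 2 * cos t ^ 2 := by rw [cos_sq t]; ring
  rw [hcos]
  linarith [one_le_cosh_two_mul_mul_cos_sq hsq]
end

section
/- For a fixed x in (0, π/2), the function t ↦ cos(x/t)^t is increasing on (1, ∞). -/
/-! With `φ = log ∘ cos` and `u = x / t`, we have `cos (x / t) ^ t = exp (x * (φ u / u))`, and
`u` decreases as `t` grows. Since `φ` is strictly concave on `[0, π/2)` with `φ 0 = 0`, the chord
slope `φ u / u` from the origin strictly decreases in `u`, so the whole expression increases in `t`. -/

open Real Set

lemma strictConcaveOn_log_cos : StrictConcaveOn ℝ (Ico 0 (π / 2)) (log ∘ cos) := by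
  have hcos_pos : cos '' Ico 0 (π / 2) ⊆ Ioi 0 := by
    rintro _ ⟨u, hu, rfl⟩
    exact cos_pos_of_mem_Ioo ⟨by linarith [pi_pos, hu.1], hu.2⟩
  have hcos_concave : StrictConcaveOn ℝ (Ico 0 (π / 2)) cos :=
    strictConcaveOn_cos_Icc.subset
      (Ico_subset_Icc_self.trans (Icc_subset_Icc (by linarith [pi_pos]) le_rfl)) (convex_Ico _ _)
  have hcos_inj : InjOn cos (Ico 0 (π / 2)) :=
    injOn_cos.mono (Ico_subset_Icc_self.trans (Icc_subset_Icc le_rfl (by linarith [pi_pos])))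
  have himage_convex : Convex ℝ (cos '' Ico 0 (π / 2)) :=
    (isPreconnected_Ico.image _ continuousOn_cos).ordConnected.convex
  exact (strictConcaveOn_log_Ioi.subset hcos_pos himage_convex).comp hcos_concave
    (strictMonoOn_log.mono hcos_pos) hcos_inj

lemma StrictConcaveOn.strictAntiOn_div_self {s : Set ℝ} {φ : ℝ → ℝ} (hφ : StrictConcaveOn ℝ s φ)
    (h0 : 0 ∈ s) (hφ0 : φ 0 = 0) : StrictAntiOn (fun u => φ u / u) (s \ {0}) := by
  intro u hu v hv huv
  simpa [hφ0] using hφ.secant_strict_mono h0 hu.1 hv.1 hu.2 hv.2 huv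

lemma StrictConcaveOn.strictMonoOn_mul_comp_div {s : Set ℝ} {φ : ℝ → ℝ}
    (hφ : StrictConcaveOn ℝ s φ) (h0 : 0 ∈ s) (hφ0 : φ 0 = 0) {x : ℝ} (hx : 0 < x) :
    StrictMonoOn (fun t => t * φ (x / t)) (Ioi 0 ∩ (x / ·) ⁻¹' s) := by
  rintro a ⟨ha, has⟩ b ⟨hb, hbs⟩ hab
  have hslope := hφ.strictAntiOn_div_self h0 hφ0 ⟨hbs, (div_pos hx hb).ne'⟩
    ⟨has, (div_pos hx ha).ne'⟩ (div_lt_div_of_pos_left hx ha hab)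
  have hmul : ∀ t, 0 < t → t * φ (x / t) = x * (φ (x / t) / (x / t)) := fun t ht => by
    field_simp
  simp only [hmul a ha, hmul b hb]
  exact mul_lt_mul_of_pos_left hslope hx

theorem stmt_9 (x : ℝ) (hx : x ∈ Set.Ioo 0 (Real.pi / 2)) :
    StrictMonoOn (fun t : ℝ => Real.cos (x / t) ^ t) (Set.Ioi 1) := by
  obtain ⟨hx0, hx2⟩ := hx
  have hdiv : ∀ t ∈ Ioi (1 : ℝ), x / t ∈ Ico 0 (π / 2) := fun t (ht : 1 < t) =>
    ⟨by positivity, (div_lt_self hx0 ht).trans hx2⟩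
  have hexp : StrictMonoOn (fun t => exp (t * log (cos (x / t)))) (Ioi 1) :=
    exp_strictMono.comp_strictMonoOn <|
      (strictConcaveOn_log_cos.strictMonoOn_mul_comp_div (left_mem_Ico.2 (by positivity))
        (by simp) hx0).mono fun t ht => ⟨Ioi_subset_Ioi zero_le_one ht, hdiv t ht⟩
  refine hexp.congr fun t ht => ?_
  have hcos : 0 < cos (x / t) := cos_pos_of_mem_Ioo ⟨by linarith [(hdiv t ht).1], (hdiv t ht).2⟩
  simp only [rpow_def_of_pos hcos, mul_comm]
end

section
/- For a fixed x in (0, π/2), the function t ↦ sin(x/t)^t is decreasing on (1, ∞). -/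
/-!
For `1 < s < t`, both `x / t < x / s` lie in `(0, π/2)`, so `0 < sin (x / t) ≤ sin (x / s) < 1`.
Raising a base in `(0, 1)` to a larger exponent makes it smaller, hence
`sin (x / t) ^ t < sin (x / t) ^ s ≤ sin (x / s) ^ s`.
-/

open Real Set

lemma strictAntiOn_rpow_self_of_antitoneOn {g : ℝ → ℝ} {S : Set ℝ} (hS : S ⊆ Ioi 0)
    (hg : AntitoneOn g S) (hg01 : ∀ t ∈ S, g t ∈ Ioo 0 1) :
    StrictAntiOn (fun t => g t ^ t) S := by
  intro s hs t ht hst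
  obtain ⟨hgt0, hgt1⟩ := hg01 t ht
  calc g t ^ t < g t ^ s := rpow_lt_rpow_of_exponent_gt hgt0 hgt1 hst
    _ ≤ g s ^ s := rpow_le_rpow hgt0.le (hg hs ht hst.le) (le_of_lt (hS hs))

lemma div_mem_Ioo_of_one_lt {x b t : ℝ} (hx : x ∈ Ioo 0 b) (ht : 1 < t) : x / t ∈ Ioo 0 b :=
  ⟨div_pos hx.1 (one_pos.trans ht), (div_lt_self hx.1 ht).trans hx.2⟩

lemma sin_mem_Ioo_zero_one {y : ℝ} (hy : y ∈ Ioo 0 (π / 2)) : sin y ∈ Ioo 0 1 := by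
  have hπ : 0 < π := pi_pos
  refine ⟨sin_pos_of_pos_of_lt_pi hy.1 (by linarith [hy.2]), ?_⟩
  simpa using strictMonoOn_sin ⟨by linarith [hy.1], hy.2.le⟩ ⟨by linarith, le_rfl⟩ hy.2

lemma antitoneOn_sin_div {x : ℝ} (hx : x ∈ Ioo 0 (π / 2)) :
    AntitoneOn (fun t => sin (x / t)) (Ioi 1) := by
  intro s hs t ht hst
  have hxs := div_mem_Ioo_of_one_lt hx hs
  have hxt := div_mem_Ioo_of_one_lt hx ht
  have hπ : 0 < π := pi_pos
  exact monotoneOn_sin ⟨by linarith [hxt.1], hxt.2.le⟩ ⟨by linarith [hxs.1], hxs.2.le⟩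
    (div_le_div_of_nonneg_left hx.1.le (one_pos.trans hs) hst)

theorem stmt_10 (x : ℝ) (hx : x ∈ Set.Ioo 0 (Real.pi / 2)) :
    StrictAntiOn (fun t : ℝ => Real.sin (x / t) ^ t) (Set.Ioi 1) :=
  strictAntiOn_rpow_self_of_antitoneOn (Ioi_subset_Ioi zero_le_one) (antitoneOn_sin_div hx)
    fun _ ht => sin_mem_Ioo_zero_one (div_mem_Ioo_of_one_lt hx ht)
end

section
/- For a fixed x in (0, π/2), the function t ↦ cosh(x/t)^t is decreasing on (0, ∞). -/
/-!
Since `cosh (x / t) ^ t = exp (x * g (x / t))` with `g u = log (cosh u) / u`, it suffices that `g`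
is strictly increasing on `(0, ∞)`. Now `g u` is the slope of the secant of `log ∘ cosh` between
`0` and `u`, and `log ∘ cosh` is strictly convex (its derivative `tanh` is strictly increasing)
and vanishes at `0`.
-/

open Real Set

theorem Real.strictMono_tanh : StrictMono tanh := fun x y hxy =>
  lt_of_not_ge fun h => hxy.not_ge <| by
    simpa only [artanh_tanh] using artanh_le_artanh (neg_one_lt_tanh y) (tanh_lt_one x) h

theorem Real.hasDerivAt_log_cosh (u : ℝ) : HasDerivAt (fun u => log (cosh u)) (tanh u) u := by
  simpa only [tanh_eq_sinh_div_cosh] using (hasDerivAt_cosh u).log (cosh_pos u).ne'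

theorem Real.strictConvexOn_log_cosh : StrictConvexOn ℝ univ (fun u => log (cosh u)) := by
  have hderiv : deriv (fun u => log (cosh u)) = tanh :=
    funext fun u => (hasDerivAt_log_cosh u).deriv
  refine StrictMonoOn.strictConvexOn_of_deriv convex_univ
    (fun u _ => (hasDerivAt_log_cosh u).continuousAt.continuousWithinAt) ?_
  rw [hderiv]
  exact strictMono_tanh.strictMonoOn _

theorem StrictConvexOn.strictMonoOn_div_self {f : ℝ → ℝ} (hf : StrictConvexOn ℝ (Ici 0) f)
    (hf0 : f 0 = 0) : StrictMonoOn (fun u => f u / u) (Ioi 0) := by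
  intro u hu v hv huv
  simpa only [hf0, sub_zero] using hf.secant_strict_mono self_mem_Ici (Ioi_subset_Ici_self hu)
    (Ioi_subset_Ici_self hv) (ne_of_gt hu) (ne_of_gt hv) huv

theorem StrictConvexOn.strictAntiOn_perspective {f : ℝ → ℝ}
    (hf : StrictConvexOn ℝ (Ici 0) f) (hf0 : f 0 = 0) {x : ℝ} (hx : 0 < x) :
    StrictAntiOn (fun t => t * f (x / t)) (Ioi 0) := by
  intro s (hs : 0 < s) t (ht : 0 < t) hst
  have hslope : f (x / t) / (x / t) < f (x / s) / (x / s) :=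
    hf.strictMonoOn_div_self hf0 (div_pos hx ht) (div_pos hx hs)
      (div_lt_div_of_pos_left hx hs hst)
  calc t * f (x / t) = x * (f (x / t) / (x / t)) := by field_simp
    _ < x * (f (x / s) / (x / s)) := mul_lt_mul_of_pos_left hslope hx
    _ = s * f (x / s) := by field_simp

theorem stmt_11 (x : ℝ) (hx : x ∈ Set.Ioo 0 (Real.pi / 2)) :
    StrictAntiOn (fun t : ℝ => Real.cosh (x / t) ^ t) (Set.Ioi 0) := by
  have hconvex : StrictConvexOn ℝ (Ici 0) (fun u => log (cosh u)) :=
    strictConvexOn_log_cosh.subset (subset_univ _) (convex_Ici 0)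
  have hpersp := hconvex.strictAntiOn_perspective (by simp) hx.1
  have hrpow : (fun t : ℝ => cosh (x / t) ^ t) = fun t => exp (t * log (cosh (x / t))) := by
    funext t
    rw [rpow_def_of_pos (cosh_pos _), mul_comm]
  rw [hrpow]
  exact exp_strictMono.comp_strictAntiOn hpersp
end

section
/- For all x in (0, √(27/5)), sin(x)/x ≤ cos(x/3)³. -/
/-!
Taylor's theorem with alternating remainders gives `sin x / x ≤ 1 - x²/6 + x⁴/120` for `x > 0`
and `cos y ≥ 1 - y²/2`, so `cos (x/3)³ ≥ (1 - x²/18)³`. Expanding the cube, the difference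
`(1 - x²/18)³ - (1 - x²/6 + x⁴/120) = x⁴ (27/5 - x²) / 5832` is nonnegative exactly when
`x² ≤ 27/5`.
-/

open Real Set

theorem le_of_hasDerivAt_le_of_le {f g f' g' : ℝ → ℝ} {a b : ℝ}
    (hf : ∀ y, HasDerivAt f (f' y) y) (hg : ∀ y, HasDerivAt g (g' y) y)
    (ha : f a ≤ g a) (hderiv : ∀ y, a < y → f' y ≤ g' y) (hab : a ≤ b) : f b ≤ g b := by
  have hmono : MonotoneOn (g - f) (Ici a) := by
    refine monotoneOn_of_hasDerivWithinAt_nonneg (f' := g' - f') (convex_Ici a)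
      (fun y _ ↦ ((hg y).sub (hf y)).continuousAt.continuousWithinAt)
      (fun y _ ↦ ((hg y).sub (hf y)).hasDerivWithinAt) fun y hy ↦ ?_
    rw [interior_Ici] at hy
    exact sub_nonneg.2 (hderiv y hy)
  have := hmono self_mem_Ici hab hab
  simp only [Pi.sub_apply] at this
  linarith

namespace Real

theorem cos_le_one_sub_sq_div_two_add (x : ℝ) : cos x ≤ 1 - x ^ 2 / 2 + x ^ 4 / 24 := by
  wlog hx : 0 ≤ x generalizing x
  · simpa [Even.neg_pow (by decide : Even 2), Even.neg_pow (by decide : Even 4)] using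
      this (-x) (by linarith)
  refine le_of_hasDerivAt_le_of_le (g := fun y ↦ 1 - y ^ 2 / 2 + y ^ 4 / 24)
    (f' := fun y ↦ -sin y) (g' := fun y ↦ -y + y ^ 3 / 6)
    hasDerivAt_cos (fun y ↦ ?_) (by simp) (fun y hy ↦ ?_) hx
  · exact (((hasDerivAt_pow 2 y).div_const 2).const_sub 1 |>.add
      ((hasDerivAt_pow 4 y).div_const 24)).congr_deriv (by norm_num; ring)
  · linarith [sin_ge_sub_cube hy.le]

theorem sin_le_sub_cube_div_six_add {x : ℝ} (hx : 0 ≤ x) :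
    sin x ≤ x - x ^ 3 / 6 + x ^ 5 / 120 := by
  refine le_of_hasDerivAt_le_of_le (g := fun y ↦ y - y ^ 3 / 6 + y ^ 5 / 120)
    (f' := cos) (g' := fun y ↦ 1 - y ^ 2 / 2 + y ^ 4 / 24)
    hasDerivAt_sin (fun y ↦ ?_) (by simp) (fun y _ ↦ cos_le_one_sub_sq_div_two_add y) hx
  exact ((hasDerivAt_id y).sub ((hasDerivAt_pow 3 y).div_const 6) |>.add
    ((hasDerivAt_pow 5 y).div_const 120)).congr_deriv (by norm_num; ring)

end Real

theorem stmt_12 (x : ℝ) (hx : x ∈ Set.Ioo 0 (Real.sqrt (27 / 5))) :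
    Real.sin x / x ≤ Real.cos (x / 3) ^ 3 := by
  obtain ⟨hx0, hxu⟩ := hx
  have hx2 : x ^ 2 < 27 / 5 := (lt_sqrt hx0.le).1 hxu
  have hsin : sin x / x ≤ 1 - x ^ 2 / 6 + x ^ 4 / 120 := by
    rw [div_le_iff₀ hx0]
    linarith [sin_le_sub_cube_div_six_add hx0.le]
  have hpoly : 1 - x ^ 2 / 6 + x ^ 4 / 120 ≤ (1 - x ^ 2 / 18) ^ 3 := by
    nlinarith [mul_nonneg (pow_nonneg (sq_nonneg x) 2) (sub_nonneg.2 hx2.le)]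
  have hcos : (1 - x ^ 2 / 18) ^ 3 ≤ cos (x / 3) ^ 3 := by
    refine pow_le_pow_left₀ (by linarith) ?_ 3
    linarith [one_sub_sq_div_two_le_cos (x := x / 3)]
  linarith
end

section
/- For all x in (0, π/4), cosh(x)² · (cos(x)² − sin(x)²) < cos(x)². -/
/-!
By the double-angle formulas, with `t = 2x` the inequality reads `(1 + cosh t) cos t < 1 + cos t`,
i.e. `cosh t * cos t < 1`. The function `cosh t * cos t` equals `1` at `0` and is strictly
decreasing on `[0, π/2]`: its derivative `sinh t cos t - cosh t sin t` is negative there because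
`tanh t < t < tan t`.
-/

open Real Set

lemma Real.sinh_lt_mul_cosh {t : ℝ} (ht : 0 < t) : sinh t < t * cosh t := by
  have hmono : StrictMonoOn (fun s : ℝ => s * cosh s - sinh s) (Ici 0) := by
    refine strictMonoOn_of_deriv_pos (convex_Ici 0) (by fun_prop) fun s hs => ?_
    rw [interior_Ici, mem_Ioi] at hs
    have hderiv : HasDerivAt (fun s : ℝ => s * cosh s - sinh s)
        (1 * cosh s + s * sinh s - cosh s) s :=
      ((hasDerivAt_id s).mul (hasDerivAt_cosh s)).sub (hasDerivAt_sinh s)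
    rw [hderiv.deriv]
    nlinarith [sinh_pos_iff.2 hs]
  simpa using hmono self_mem_Ici ht.le ht

lemma Real.sinh_mul_cos_lt_cosh_mul_sin {t : ℝ} (h0 : 0 < t) (hπ : t < π / 2) :
    sinh t * cos t < cosh t * sin t := by
  have hcos : 0 < cos t := cos_pos_of_mem_Ioo ⟨by linarith [pi_pos], hπ⟩
  have htan : t * cos t < sin t := by
    have := lt_tan h0 hπ
    rwa [tan_eq_sin_div_cos, lt_div_iff₀ hcos] at this
  calc sinh t * cos t < t * cosh t * cos t := by gcongr; exact sinh_lt_mul_cosh h0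
    _ = cosh t * (t * cos t) := by ring
    _ < cosh t * sin t := by gcongr

lemma Real.strictAntiOn_cosh_mul_cos : StrictAntiOn (fun t => cosh t * cos t) (Icc 0 (π / 2)) := by
  refine strictAntiOn_of_deriv_neg (convex_Icc _ _) (by fun_prop) fun t ht => ?_
  rw [interior_Icc] at ht
  have hderiv : HasDerivAt (fun t => cosh t * cos t) (sinh t * cos t + cosh t * -sin t) t :=
    (hasDerivAt_cosh t).mul (hasDerivAt_cos t)
  rw [hderiv.deriv]
  linarith [sinh_mul_cos_lt_cosh_mul_sin ht.1 ht.2]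

lemma Real.cosh_mul_cos_lt_one {t : ℝ} (h0 : 0 < t) (hπ : t < π / 2) : cosh t * cos t < 1 := by
  simpa using strictAntiOn_cosh_mul_cos ⟨le_rfl, by positivity⟩ ⟨h0.le, hπ.le⟩ h0

theorem stmt_16 (x : ℝ) (hx : x ∈ Set.Ioo 0 (Real.pi / 4)) :
    Real.cosh x ^ 2 * (Real.cos x ^ 2 - Real.sin x ^ 2) < Real.cos x ^ 2 := by
  have hkey : cosh (2 * x) * cos (2 * x) < 1 :=
    cosh_mul_cos_lt_one (by linarith [hx.1]) (by linarith [hx.2])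
  have hcosh : cosh x ^ 2 = (1 + cosh (2 * x)) / 2 := by rw [cosh_two_mul, cosh_sq]; ring
  rw [← cos_two_mul', hcosh, cos_sq x]
  linarith
end

section
/- For all x in (0, π/4), cos(x)² · cosh(x)³ > 1. -/
/-!
With `t = x ^ 2 / 2`, the second-order Taylor bounds `cos x > 1 - t` and `cosh x ≥ 1 + t` reduce
the claim to `(1 - t) ^ 2 * (1 + t) ^ 3 > 1`, a polynomial inequality that holds for
`0 < t ≤ 1 / 3`; this covers `0 < x < π / 4` because `π / 4 < 4 / 5`.
-/

namespace Real

theorem sq_le_sinh_sq (x : ℝ) : x ^ 2 ≤ sinh x ^ 2 := by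
  apply sq_le_sq.2
  rw [abs_sinh]
  exact self_le_sinh_iff.2 (abs_nonneg x)

theorem one_add_sq_div_two_le_cosh_s17 (x : ℝ) : 1 + x ^ 2 / 2 ≤ cosh x := by
  have hcosh := cosh_two_mul (x / 2)
  rw [mul_div_cancel₀ x two_ne_zero, cosh_sq] at hcosh
  have := sq_le_sinh_sq (x / 2)
  linarith

end Real

theorem one_lt_one_sub_sq_mul_one_add_cube {t : ℝ} (ht₀ : 0 < t) (ht₁ : t ≤ 1 / 3) :
    1 < (1 - t) ^ 2 * (1 + t) ^ 3 := by
  have hexpand :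
      (1 - t) ^ 2 * (1 + t) ^ 3 - 1 = t * (1 - 2 * t - 2 * t ^ 2 + t ^ 3 * (1 + t)) := by
    ring
  have hquad : 0 < 1 - 2 * t - 2 * t ^ 2 := by nlinarith
  have : 0 < t * (1 - 2 * t - 2 * t ^ 2 + t ^ 3 * (1 + t)) := by positivity
  linarith

theorem one_lt_cos_sq_mul_cosh_cube {x : ℝ} (hx₀ : x ≠ 0) (hx₁ : x ^ 2 ≤ 2 / 3) :
    1 < Real.cos x ^ 2 * Real.cosh x ^ 3 :=
  calc 1 < (1 - x ^ 2 / 2) ^ 2 * (1 + x ^ 2 / 2) ^ 3 :=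
        one_lt_one_sub_sq_mul_one_add_cube (by positivity) (by linarith)
    _ ≤ Real.cos x ^ 2 * Real.cosh x ^ 3 := by
        have : 0 ≤ 1 - x ^ 2 / 2 := by linarith
        gcongr
        exacts [Real.one_sub_sq_div_two_le_cos, Real.one_add_sq_div_two_le_cosh_s17 x]

theorem stmt_17 (x : ℝ) (hx : x ∈ Set.Ioo 0 (Real.pi / 4)) :
    Real.cos x ^ 2 * Real.cosh x ^ 3 > 1 := by
  obtain ⟨hx₀, hx₁⟩ := hx
  have hx_lt : x < 4 / 5 := by linarith [Real.pi_lt_d2]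
  exact one_lt_cos_sq_mul_cosh_cube hx₀.ne' (by nlinarith)
end

section
/- For all x in (0, π/4), cos(x) · cosh(x) < 1. -/
/-!
The function `cos x * cosh x` equals `1` at `0`, and its derivative `cos x * sinh x - sin x * cosh x`
is negative on `(0, π / 2)` because there `tanh x < x < tan x`.
-/

open Real Set

namespace Real

theorem sinh_lt_mul_cosh_s18 {x : ℝ} (hx : 0 < x) : sinh x < x * cosh x := by
  have hmono : StrictMonoOn (fun y : ℝ => y * cosh y - sinh y) (Ici 0) := by
    refine strictMonoOn_of_deriv_pos (convex_Ici 0) (by fun_prop) fun y hy => ?_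
    rw [interior_Ici] at hy
    have hderiv : deriv (fun y : ℝ => y * cosh y - sinh y) y = y * sinh y := by
      simp
    rw [hderiv]
    exact mul_pos hy (sinh_pos_iff.mpr hy)
  simpa using hmono self_mem_Ici hx.le hx

theorem mul_cos_lt_sin {x : ℝ} (h0 : 0 < x) (hx : x < π / 2) : x * cos x < sin x := by
  have hcos : 0 < cos x := cos_pos_of_mem_Ioo ⟨by linarith [pi_pos], hx⟩
  have htan := lt_tan h0 hx
  rwa [tan_eq_sin_div_cos, lt_div_iff₀ hcos] at htan

theorem deriv_cos_mul_cosh (x : ℝ) :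
    deriv (fun y => cos y * cosh y) x = cos x * sinh x - sin x * cosh x := by
  rw [((hasDerivAt_cos x).fun_mul (hasDerivAt_cosh x)).deriv]
  ring

theorem strictAntiOn_cos_mul_cosh : StrictAntiOn (fun x => cos x * cosh x) (Icc 0 (π / 2)) := by
  refine strictAntiOn_of_deriv_neg (convex_Icc 0 (π / 2)) (by fun_prop) fun y hy => ?_
  rw [interior_Icc] at hy
  obtain ⟨hy0, hy⟩ := hy
  have hcos : 0 < cos y := cos_pos_of_mem_Ioo ⟨by linarith [pi_pos], hy⟩
  rw [deriv_cos_mul_cosh, sub_neg]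
  calc cos y * sinh y
      < cos y * (y * cosh y) := mul_lt_mul_of_pos_left (sinh_lt_mul_cosh_s18 hy0) hcos
    _ = y * cos y * cosh y := by ring
    _ < sin y * cosh y := mul_lt_mul_of_pos_right (mul_cos_lt_sin hy0 hy) (cosh_pos y)

theorem cos_mul_cosh_lt_one {x : ℝ} (h0 : 0 < x) (hx : x ≤ π / 2) : cos x * cosh x < 1 := by
  simpa using strictAntiOn_cos_mul_cosh (left_mem_Icc.mpr (by positivity)) ⟨h0.le, hx⟩ h0

end Real

theorem stmt_18 (x : ℝ) (hx : x ∈ Set.Ioo 0 (Real.pi / 4)) :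
    Real.cos x * Real.cosh x < 1 :=
  Real.cos_mul_cosh_lt_one hx.1 (by linarith [hx.2, Real.pi_pos])
end

section
/- For all x in (0, 1), sinh(x) · arcsinh(x) ≥ x². -/
/-!
Put `y = arsinh x`, so that `sinh y = x`. For `x > 0` we have `0 < y ≤ x`, and since `sinh` is
convex on `[0, ∞)` and vanishes at `0`, its secant slope `sinh t / t` is monotone in `t > 0`.
Hence `x / y = sinh y / y ≤ sinh x / x`, i.e. `x ^ 2 ≤ sinh x * y`. Both sides are even in `x`.
-/

open Real Set

namespace Real

lemma convexOn_sinh_Ici : ConvexOn ℝ (Ici 0) sinh := by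
  refine MonotoneOn.convexOn_of_deriv (convex_Ici 0) continuous_sinh.continuousOn
    differentiable_sinh.differentiableOn ?_
  rw [interior_Ici, deriv_sinh]
  intro a ha b hb hab
  rw [cosh_le_cosh, abs_of_pos ha, abs_of_pos hb]
  exact hab

lemma monotoneOn_sinh_div_self : MonotoneOn (fun t => sinh t / t) (Ioi 0) := by
  intro a ha b hb hab
  simpa using convexOn_sinh_Ici.secant_mono (a := 0) self_mem_Ici (mem_Ici_of_Ioi ha)
    (mem_Ici_of_Ioi hb) (ne_of_gt ha) (ne_of_gt hb) hab

lemma arsinh_le_self {x : ℝ} (hx : 0 ≤ x) : arsinh x ≤ x := by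
  rw [← sinh_le_sinh, sinh_arsinh]
  exact self_le_sinh_iff.2 hx

lemma sq_le_sinh_mul_arsinh_of_pos {x : ℝ} (hx : 0 < x) : x ^ 2 ≤ sinh x * arsinh x := by
  have hy : 0 < arsinh x := arsinh_pos_iff.2 hx
  have hslope : sinh (arsinh x) / arsinh x ≤ sinh x / x :=
    monotoneOn_sinh_div_self hy hx (arsinh_le_self hx.le)
  rw [sinh_arsinh, div_le_div_iff₀ hy hx] at hslope
  linarith

lemma sq_le_sinh_mul_arsinh (x : ℝ) : x ^ 2 ≤ sinh x * arsinh x := by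
  rcases lt_trichotomy x 0 with hx | rfl | hx
  · simpa [arsinh_neg] using sq_le_sinh_mul_arsinh_of_pos (neg_pos.2 hx)
  · simp
  · exact sq_le_sinh_mul_arsinh_of_pos hx

end Real

theorem stmt_19_general (x : ℝ) :
    Real.sinh x * Real.arsinh x ≥ x ^ 2 :=
  Real.sq_le_sinh_mul_arsinh x

theorem stmt_19 (x : ℝ) (hx : x ∈ Set.Ioo (0:ℝ) 1) :
    Real.sinh x * Real.arsinh x ≥ x ^ 2 :=
  stmt_19_general x
end
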